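/- Let G, H, K be groupoids, p : K ⥤ G a functor, and q : K ⥤ H a finite weak cover. For objects η of H and γ of G define X(η, γ) as the coend over K of κ ↦ Hom_G(p κ, γ) × Hom_H(η, q κ): the quotient of Σ κ, Hom_G(p κ, γ) × Hom_H(η, q κ) by the equivalence relation generated by (g ∘ p(k), h) ~ (g, q(k) ∘ h) for all k : κ̄ → κ, g : p κ → γ, h : η → q κ̄. Then for every object η of H, the G-set γ ↦ X(η, γ) (with g' : γ → γ' acting by postcomposition on the G-factor) is free and finite. -/

import Mathlib

open CategoryTheory Opposite

universe w v₁ v₂ v₃ u₁ u₂ u₃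

/-- Freeness for a `Type`-valued functor: all orbit maps `g ↦ g • x` are injective. -/
def GSetFree {C : Type u} [Category.{v} C] (T : C ⥤ Type w) : Prop :=
  ∀ ⦃c c' : C⦄ (x : T.obj c), Function.Injective fun g : c ⟶ c' => T.map g x

/-- The relation on `Σ c, T c` whose quotient is the colimit of `T` in `Type`. -/
def ColimRel {C : Type u} [Category.{v} C] (T : C ⥤ Type w) :
    (Σ c : C, T.obj c) → (Σ c : C, T.obj c) → Prop :=
  fun x y => ∃ g : x.1 ⟶ y.1, T.map g x.2 = y.2

/-- Finiteness for a `Type`-valued functor: its colimit in `Type` is a finite set. -/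
def GSetFinite {C : Type u} [Category.{v} C] (T : C ⥤ Type w) : Prop :=
  Finite (Quot (ColimRel T))

/-- A functor is a *finite weak cover* if each of its homotopy fibers (structured-arrow
categories) is thin and has finitely many connected components. -/
def FiniteWeakCover {K : Type u₃} {C : Type u₄} [Category.{v₃} K] [Category.{v₄} C]
    (m : K ⥤ C) : Prop :=
  ∀ c : C, Quiver.IsThin (StructuredArrow c m) ∧
    Finite (ConnectedComponents (StructuredArrow c m))

section Correspondence

variable {G : Type u₁} {H : Type u₂} {K : Type u₃}
  [Groupoid.{v₁} G] [Groupoid.{v₂} H] [Groupoid.{v₃} K]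

/-- The relation on `Σ κ, Hom_G(p κ, γ) × Hom_H(η, q κ)` generated by
`(g ∘ p(k), h) ~ (g, q(k) ∘ h)`; its quotient is the coend `X(η, γ)` attached to the
correspondence `H ⟵q K ⟶p G`. -/
def CorrRel (p : K ⥤ G) (q : K ⥤ H) (η : H) (γ : G) :
    (Σ κ : K, (p.obj κ ⟶ γ) × (η ⟶ q.obj κ)) →
      (Σ κ : K, (p.obj κ ⟶ γ) × (η ⟶ q.obj κ)) → Prop :=
  fun a b => ∃ k : a.1 ⟶ b.1, a.2.1 = p.map k ≫ b.2.1 ∧ b.2.2 = a.2.2 ≫ q.map k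

/-- The `G`-set `γ ↦ X(η, γ)` attached to a correspondence `H ⟵q K ⟶p G` of groupoids:
`X(η, γ)` is the coend over `K` of `κ ↦ Hom_G(p κ, γ) × Hom_H(η, q κ)`, and `g' : γ ⟶ γ'`
acts by postcomposition on the `G`-factor. -/
def corrGSet (p : K ⥤ G) (q : K ⥤ H) (η : H) : G ⥤ Type (max u₃ v₁ v₂) where
  obj γ := Quot (CorrRel p q η γ)
  map {γ γ'} g' :=
    TypeCat.ofHom (Quot.map
      (fun a => (⟨a.1, (a.2.1 ≫ g', a.2.2)⟩ : Σ κ : K, (p.obj κ ⟶ γ') × (η ⟶ q.obj κ)))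
      (by
        rintro ⟨κ, g, h⟩ ⟨κ', g₂, h₂⟩ ⟨k, hg, hh⟩
        exact ⟨k, by dsimp at *; rw [hg, Category.assoc], hh⟩) :
      Quot (CorrRel p q η γ) → Quot (CorrRel p q η γ'))
  map_id γ := by
    ext z
    induction z using Quot.ind with
    | _ a => simp; rfl
  map_comp f g := by
    ext z
    induction z using Quot.ind with
    | _ a => simp [Quot.map]

theorem corrRel_equivalence (p : K ⥤ G) (q : K ⥤ H) (η : H) (γ : G) :
    Equivalence (CorrRel p q η γ) where
  refl a := ⟨𝟙 a.1, by simp, by simp⟩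
  symm := by
    rintro a b ⟨k, hg, hh⟩
    exact ⟨Groupoid.inv k, by simp [hg], by simp [hh]⟩
  trans := by
    rintro a b c ⟨k, hg, hh⟩ ⟨k', hg', hh'⟩
    exact ⟨k ≫ k', by simp [hg, hg'], by simp [hh, hh']⟩

@[simp]
theorem corrGSet_map_mk (p : K ⥤ G) (q : K ⥤ H) (η : H) {γ γ' : G} (g' : γ ⟶ γ') {κ : K}
    (g : p.obj κ ⟶ γ) (h : η ⟶ q.obj κ) :
    (corrGSet p q η).map g' (Quot.mk _ ⟨κ, (g, h)⟩) = Quot.mk _ ⟨κ, (g ≫ g', h)⟩ :=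
  rfl

theorem StructuredArrow.eq_id_of_isThin {C : Type*} {D : Type*} [Category C] [Category D]
    {d : D} {q : C ⥤ D} (hthin : Quiver.IsThin (StructuredArrow d q)) {c : C}
    {h : d ⟶ q.obj c} {k : c ⟶ c} (hk : h ≫ q.map k = h) : k = 𝟙 c := by
  have : StructuredArrow.homMk (f := .mk h) (f' := .mk h) k (by simpa using hk) = 𝟙 _ :=
    (hthin _ _).elim _ _
  simpa using congrArg CommaMorphism.right this

/-- A relation `(κ, g ≫ g₁, h) ~ (κ, g ≫ g₂, h)` is witnessed by an automorphism of `(κ, h)`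
in the homotopy fiber, which thinness forces to be the identity. -/
theorem corrGSet_free (p : K ⥤ G) (q : K ⥤ H) (η : H)
    (hthin : Quiver.IsThin (StructuredArrow η q)) : GSetFree (corrGSet p q η) := by
  intro γ γ' x
  induction x using Quot.ind with
  | _ a =>
    obtain ⟨κ, g, h⟩ := a
    intro g₁ g₂ hg
    simp only [corrGSet_map_mk] at hg
    obtain ⟨k, hgk, hhk⟩ := ((corrRel_equivalence p q η γ').quot_mk_eq_iff _ _).mp hg
    have hk : k = 𝟙 κ := StructuredArrow.eq_id_of_isThin hthin hhk.symm
    subst hk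
    exact (cancel_epi g).mp (by simpa using hgk)

def fiberToColimit (p : K ⥤ G) (q : K ⥤ H) (η : H) :
    StructuredArrow η q ⥤ Discrete (Quot (ColimRel (corrGSet p q η))) where
  obj X := ⟨Quot.mk _ ⟨p.obj X.right, Quot.mk _ ⟨X.right, (𝟙 _, X.hom)⟩⟩⟩
  map f := Discrete.eqToHom <| Quot.sound
    ⟨p.map f.right, Quot.sound ⟨f.right, by simp, by simp⟩⟩

/-- The class of `(κ, g, h) ∈ X(η, γ)` in the colimit is the image of `(κ, 𝟙, h) ∈ X(η, p κ)`
under `g`. -/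
theorem surjective_liftFunctor_fiberToColimit (p : K ⥤ G) (q : K ⥤ H) (η : H) :
    Function.Surjective (ConnectedComponents.liftFunctor _ (fiberToColimit p q η)) := by
  rintro ⟨γ, z⟩
  induction z using Quot.ind with
  | _ a =>
    obtain ⟨κ, g, h⟩ := a
    refine ⟨Quotient.mk _ (StructuredArrow.mk h), Quot.sound ⟨g, ?_⟩⟩
    exact (corrGSet_map_mk p q η g (𝟙 _) h).trans (by rw [Category.id_comp])

theorem corrGSet_finite (p : K ⥤ G) (q : K ⥤ H) (η : H)
    (hfin : Finite (ConnectedComponents (StructuredArrow η q))) :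
    GSetFinite (corrGSet p q η) :=
  Finite.of_surjective _ (surjective_liftFunctor_fiberToColimit p q η)

/-- If `q : K ⥤ H` is a finite weak cover, then for every `η` the `G`-set
`γ ↦ X(η, γ) = ∫^κ Hom_G(p κ, γ) × Hom_H(η, q κ)` is free and finite. -/
theorem corrGSet_free_and_finite (p : K ⥤ G) (q : K ⥤ H) (hq : FiniteWeakCover q) (η : H) :
    GSetFree (corrGSet p q η) ∧ GSetFinite (corrGSet p q η) :=
  ⟨corrGSet_free p q η (hq η).1, corrGSet_finite p q η (hq η).2⟩

end Correspondence
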